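/- Let G be a graph and x, y two vertices of G. Let θ ∈ (0,1) and c > 0 be constants. Suppose μ is a probability measure on (possibly self-intersecting) paths joining x to y in G such that (μ × μ){(φ, ψ) : |φ ∩ ψ| = n} ≤ c θⁿ for all n ∈ ℕ, where |φ ∩ ψ| denotes the number of edges the paths φ and ψ have in common (as sets of edges). Then for Bernoulli(p) bond percolation on G with θ < p < 1, the connection probability satisfies τ(x, y) ≥ c⁻¹(1 − θ/p). -/

import Mathlib

open MeasureTheory

open scoped ENNReal

section Preamble

variable {V : Type*}

/-- The spanning percolation subgraph of `G` determined by the configuration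
`ω ⊆ Sym2 V` of open edges. -/
def percGraph (G : SimpleGraph V) (ω : Set (Sym2 V)) : SimpleGraph V where
  Adj x y := G.Adj x y ∧ s(x, y) ∈ ω
  symm := ⟨fun x y ⟨h, hm⟩ => ⟨h.symm, by rwa [Sym2.eq_swap]⟩⟩
  loopless := ⟨fun x ⟨h, _⟩ => G.loopless.irrefl x h⟩

/-- The cluster (vertex set of the connected component) of `v` in the
configuration `ω`. -/
def cluster (G : SimpleGraph V) (ω : Set (Sym2 V)) (v : V) : Set V :=
  {u | (percGraph G ω).Reachable v u}

/-- `g` is an automorphism of the graph `G`. -/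
def IsGraphAut (G : SimpleGraph V) (g : Equiv.Perm V) : Prop :=
  ∀ x y, G.Adj (g x) (g y) ↔ G.Adj x y

/-- The action of a permutation of the vertices on bond configurations. -/
def edgeAct (g : Equiv.Perm V) (ω : Set (Sym2 V)) : Set (Sym2 V) :=
  Sym2.map g '' ω

/-- The action of a permutation of the vertices on vertex sets. -/
def vertAct (g : Equiv.Perm V) (C : Set V) : Set V := (g : V → V) '' C

/-- `G` is locally finite. -/
def LocFin (G : SimpleGraph V) : Prop := ∀ v, (G.neighborSet v).Finite

/-- A set of permutations acts transitively on the vertices. -/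
def TransSubgroup (Γ : Subgroup (Equiv.Perm V)) : Prop :=
  ∀ x y : V, ∃ γ ∈ Γ, γ x = y

/-- Unimodularity of a transitive closed automorphism group of a connected
locally finite graph, via the standard counting characterization
`|{z : ∃ γ ∈ Γ, γx = x, γy = z}| = |{z : ∃ γ ∈ Γ, γy = y, γx = z}|`. -/
def UnimodSubgroup (Γ : Subgroup (Equiv.Perm V)) : Prop :=
  ∀ x y : V,
    {z | ∃ γ ∈ Γ, γ x = x ∧ γ y = z}.ncard = {z | ∃ γ ∈ Γ, γ y = y ∧ γ x = z}.ncard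

/-- The topology of pointwise convergence on the permutations of the
(discrete) vertex set. -/
def permTop (V : Type*) : TopologicalSpace (Equiv.Perm V) :=
  letI : TopologicalSpace V := ⊥
  TopologicalSpace.induced
    (fun g : Equiv.Perm V => ((g : V → V), (g.symm : V → V))) inferInstance

/-- `Γ` is closed in the topology of pointwise convergence. -/
def ClosedSubgroup' (Γ : Subgroup (Equiv.Perm V)) : Prop :=
  @IsClosed _ (permTop V) (Γ : Set (Equiv.Perm V))

/-- `P` is a `Γ`-invariant bond percolation process (a probability measure on
`2^E`, invariant under each element of `Γ`). -/
def InvariantPerc (Γ : Subgroup (Equiv.Perm V)) (P : Measure (Set (Sym2 V))) : Prop :=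
  IsProbabilityMeasure P ∧ ∀ γ ∈ Γ, Measure.map (edgeAct γ) P = P

/-- `P` is `Γ`-ergodic: every `Γ`-invariant event has probability `0` or `1`. -/
def ErgodicPerc (Γ : Subgroup (Equiv.Perm V)) (P : Measure (Set (Sym2 V))) : Prop :=
  ∀ A : Set (Set (Sym2 V)), MeasurableSet A → (∀ γ ∈ Γ, edgeAct γ ⁻¹' A = A) →
    P A = 0 ∨ P A = 1

/-- `P` is Bernoulli(`p`) bond percolation on `G`: the product measure on the
subsets of the edge set giving each edge probability `p` independently.  (These
conditions characterize that product measure uniquely.) -/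
def IsBernoulli (G : SimpleGraph V) (p : ℝ) (P : Measure (Set (Sym2 V))) : Prop :=
  IsProbabilityMeasure P ∧ P {ω | ω ⊆ G.edgeSet} = 1 ∧
    ∀ s : Finset (Sym2 V), ↑s ⊆ G.edgeSet →
      P {ω | ∀ e ∈ s, e ∈ ω} = ENNReal.ofReal p ^ s.card

/-- There is exactly one infinite cluster in the configuration `ω`. -/
def uniqueInfCluster (G : SimpleGraph V) (ω : Set (Sym2 V)) : Prop :=
  (∃ v, (cluster G ω v).Infinite) ∧
    ∀ u v, (cluster G ω u).Infinite → (cluster G ω v).Infinite →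
      cluster G ω u = cluster G ω v

/-- Insertion tolerance of a bond percolation process. -/
def InsertionTolerant (G : SimpleGraph V) (P : Measure (Set (Sym2 V))) : Prop :=
  ∀ e ∈ G.edgeSet, ∀ A : Set (Set (Sym2 V)), MeasurableSet A → 0 < P A →
    0 < P ((fun ω => insert e ω) '' A)

/-- Deletion tolerance of a bond percolation process. -/
def DeletionTolerant (G : SimpleGraph V) (P : Measure (Set (Sym2 V))) : Prop :=
  ∀ e ∈ G.edgeSet, ∀ A : Set (Set (Sym2 V)), MeasurableSet A → 0 < P A →
    0 < P ((fun ω => ω \ {e}) '' A)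

/-- The uniqueness threshold `p_u` of a graph: the infimum of the `p ∈ [0,1]`
for which Bernoulli(`p`) bond percolation has a unique infinite cluster a.s. -/
noncomputable def pu (G : SimpleGraph V) : ℝ :=
  sInf {p : ℝ | p ∈ Set.Icc (0 : ℝ) 1 ∧
    ∀ P : Measure (Set (Sym2 V)), IsBernoulli G p P →
      ∀ᵐ ω ∂P, uniqueInfCluster G ω}

/-- The (right) Cayley graph of a group with respect to a generating set `S`. -/
def cayleyGraph (Γ : Type*) [Group Γ] (S : Finset Γ) : SimpleGraph Γ :=
  SimpleGraph.fromRel (fun v w => ∃ s ∈ S, w = v * s)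

end Preamble

/-- The (discrete) measurable structure on the space of walks from `x` to `y`
in `G`. -/
instance walkMeasurableSpace {V : Type*} (G : SimpleGraph V) (x y : V) :
    MeasurableSpace (G.Walk x y) := ⊤

/-- The number of edges that the two (possibly self-intersecting) paths `φ`
and `ψ` have in common, as sets of edges. -/
noncomputable def sharedEdges {V : Type*} {G : SimpleGraph V} {x y : V}
    (φ ψ : G.Walk x y) : ℕ :=
  letI := Classical.decEq (Sym2 V)
  (φ.edges.toFinset ∩ ψ.edges.toFinset).card

/-!
Second-moment method. With `Z = ∫ 1{φ open} / P(φ open) dμ(φ)` one has `E Z = 1`, `Z > 0` only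
when `x` and `y` are connected, and `E Z² = ∫∫ P(φ, ψ open) / (P(φ open) P(ψ open)) dμ dμ`,
which for Bernoulli(`p`) percolation is `∫∫ p^(-|φ ∩ ψ|) dμ dμ ≤ ∑ c (θ/p)ⁿ = c / (1 - θ/p)`.
Cauchy–Schwarz gives `τ(x, y) ≥ (E Z)² / E Z²`. Since the space of walks may be uncountable, `Z`
is realised as the Radon–Nikodym derivative of the mixture `∫ P[· | φ open] dμ(φ)` with respect
to `P`.
-/

section CauchySchwarz

variable {Ω : Type*} [MeasurableSpace Ω]

theorem sq_setLIntegral_le_measure_mul (P : Measure Ω) {f : Ω → ℝ≥0∞} (hf : AEMeasurable f P)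
    (A : Set Ω) : (∫⁻ ω in A, f ω ∂P) ^ 2 ≤ P A * ∫⁻ ω in A, f ω ^ 2 ∂P := by
  have h := ENNReal.lintegral_mul_le_Lp_mul_Lq (P.restrict A) Real.HolderConjugate.two_two
    (aemeasurable_const (b := 1)) hf.restrict
  simp only [Pi.mul_apply, one_mul, one_pow, lintegral_const, ENNReal.rpow_two,
    Measure.restrict_apply_univ] at h
  calc (∫⁻ ω in A, f ω ∂P) ^ 2
      ≤ ((P A) ^ (1 / 2 : ℝ) * (∫⁻ ω in A, f ω ^ 2 ∂P) ^ (1 / 2 : ℝ)) ^ 2 := by gcongr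
    _ = P A * ∫⁻ ω in A, f ω ^ 2 ∂P := by
        rw [mul_pow, ← ENNReal.rpow_natCast, ← ENNReal.rpow_mul, ← ENNReal.rpow_natCast,
          ← ENNReal.rpow_mul]
        norm_num

end CauchySchwarz

section SecondMoment

open ProbabilityTheory

variable {Ω ι : Type*} [MeasurableSpace Ω] [MeasurableSpace ι]

noncomputable def correlationEnergy (P : Measure Ω) (μ : Measure ι) (C : ι → Set Ω) : ℝ≥0∞ :=
  ∫⁻ i, ∫⁻ j, P (C i ∩ C j) / (P (C i) * P (C j)) ∂μ ∂μ

theorem lintegral_rnDeriv_sq {ν P : Measure Ω} [ν.HaveLebesgueDecomposition P] (hνP : ν ≪ P) :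
    ∫⁻ ω, ν.rnDeriv P ω ^ 2 ∂P = ∫⁻ ω, ν.rnDeriv P ω ∂ν := by
  have hZ := Measure.measurable_rnDeriv ν P
  calc ∫⁻ ω, ν.rnDeriv P ω ^ 2 ∂P = ∫⁻ ω, ν.rnDeriv P ω ∂(P.withDensity (ν.rnDeriv P)) := by
        rw [lintegral_withDensity_eq_lintegral_mul _ hZ hZ]
        simp only [Pi.mul_apply, sq]
    _ = ∫⁻ ω, ν.rnDeriv P ω ∂ν := by rw [Measure.withDensity_rnDeriv_eq ν P hνP]

variable [DiscreteMeasurableSpace ι]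

theorem bind_cond_apply (P : Measure Ω) (μ : Measure ι) (C : ι → Set Ω) {B : Set Ω}
    (hB : MeasurableSet B) : μ.bind (fun i => P[|C i]) B = ∫⁻ i, P[B | C i] ∂μ :=
  Measure.bind_apply hB Measurable.of_discrete.aemeasurable

theorem bind_cond_absolutelyContinuous (P : Measure Ω) (μ : Measure ι) (C : ι → Set Ω) :
    μ.bind (fun i => P[|C i]) ≪ P := by
  refine Measure.AbsolutelyContinuous.mk fun B hB hPB => ?_
  rw [bind_cond_apply P μ C hB]
  simp [cond_absolutelyContinuous hPB]

variable {P : Measure Ω} [IsFiniteMeasure P] {μ : Measure ι} [IsProbabilityMeasure μ]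
  {C : ι → Set Ω}

theorem bind_cond_eq_one (hC0 : ∀ i, P (C i) ≠ 0) {A : Set Ω} (hA : MeasurableSet A)
    (hCA : ∀ i, C i ⊆ A) : μ.bind (fun i => P[|C i]) A = 1 := by
  rw [bind_cond_apply P μ C hA]
  have h : ∀ i, P[A | C i] = 1 := fun i => by
    rw [cond_apply' hA, Set.inter_eq_left.mpr (hCA i), ENNReal.inv_mul_cancel (hC0 i)
      (measure_ne_top P _)]
  simp [h]

theorem isProbabilityMeasure_bind_cond (hC0 : ∀ i, P (C i) ≠ 0) :
    IsProbabilityMeasure (μ.bind fun i => P[|C i]) :=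
  ⟨bind_cond_eq_one hC0 MeasurableSet.univ fun _ => Set.subset_univ _⟩

theorem lintegral_rnDeriv_bind_cond (hC : ∀ i, MeasurableSet (C i)) (hC0 : ∀ i, P (C i) ≠ 0) :
    ∫⁻ ω, (μ.bind fun i => P[|C i]).rnDeriv P ω ∂(μ.bind fun i => P[|C i]) =
      correlationEnergy P μ C := by
  set ν := μ.bind fun i => P[|C i]
  have := isProbabilityMeasure_bind_cond (μ := μ) hC0
  have hν : P.withDensity (ν.rnDeriv P) = ν :=
    Measure.withDensity_rnDeriv_eq ν P (bind_cond_absolutelyContinuous P μ C)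
  rw [Measure.lintegral_bind Measurable.of_discrete.aemeasurable
    (Measure.measurable_rnDeriv ν P).aemeasurable]
  refine lintegral_congr fun i => ?_
  rw [ProbabilityTheory.cond, lintegral_smul_measure, ← withDensity_apply _ (hC i), hν,
    bind_cond_apply P μ C (hC i), smul_eq_mul,
    ← lintegral_const_mul' _ _ (ENNReal.inv_ne_top.mpr (hC0 i))]
  refine lintegral_congr fun j => ?_
  rw [cond_apply (hC j), Set.inter_comm, ENNReal.div_eq_inv_mul,
    ENNReal.mul_inv (Or.inl (hC0 i)) (Or.inl (measure_ne_top P _))]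
  ring

theorem one_le_measure_mul_correlationEnergy (hC : ∀ i, MeasurableSet (C i))
    (hC0 : ∀ i, P (C i) ≠ 0) {A : Set Ω} (hCA : ∀ i, C i ⊆ A) :
    1 ≤ P A * correlationEnergy P μ C := by
  set ν := μ.bind fun i => P[|C i]
  set A' := toMeasurable P A
  have hA' : MeasurableSet A' := measurableSet_toMeasurable P A
  have hνA' : ν A' = 1 :=
    bind_cond_eq_one hC0 hA' fun i => (hCA i).trans (subset_toMeasurable P A)
  have := isProbabilityMeasure_bind_cond (μ := μ) hC0
  have hνP : ν ≪ P := bind_cond_absolutelyContinuous P μ C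
  calc 1 = (∫⁻ ω in A', ν.rnDeriv P ω ∂P) ^ 2 := by
        rw [← withDensity_apply _ hA', Measure.withDensity_rnDeriv_eq ν P hνP, hνA', one_pow]
    _ ≤ P A' * ∫⁻ ω in A', ν.rnDeriv P ω ^ 2 ∂P :=
        sq_setLIntegral_le_measure_mul P (Measure.measurable_rnDeriv ν P).aemeasurable A'
    _ ≤ P A' * ∫⁻ ω, ν.rnDeriv P ω ^ 2 ∂P := by
        gcongr P A' * ?_
        exact setLIntegral_le_lintegral _ _
    _ = P A * correlationEnergy P μ C := by
        rw [measure_toMeasurable, lintegral_rnDeriv_sq hνP, lintegral_rnDeriv_bind_cond hC hC0]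

end SecondMoment

section ProductBound

variable {α β : Type*} [MeasurableSpace α] [MeasurableSpace β]

/-- `S` need not be measurable: `μ.prod ν S` is then its outer measure. -/
theorem lintegral_lintegral_indicator_le_prod (μ : Measure α) (ν : Measure β) [SFinite ν]
    (S : Set (α × β)) (a : ℝ≥0∞) :
    ∫⁻ x, ∫⁻ y, S.indicator (fun _ => a) (x, y) ∂ν ∂μ ≤ a * μ.prod ν S := by
  set U := toMeasurable (μ.prod ν) S
  have hU : MeasurableSet U := measurableSet_toMeasurable _ S
  calc ∫⁻ x, ∫⁻ y, S.indicator (fun _ => a) (x, y) ∂ν ∂μ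
      ≤ ∫⁻ x, ∫⁻ y, (Prod.mk x ⁻¹' U).indicator (fun _ => a) y ∂ν ∂μ :=
        lintegral_mono fun x => lintegral_mono fun y =>
          Set.indicator_le_indicator_of_subset (subset_toMeasurable _ S) (fun _ => zero_le) _
    _ = ∫⁻ x, a * ν (Prod.mk x ⁻¹' U) ∂μ := by
        simp only [lintegral_indicator_const (measurable_prodMk_left hU)]
    _ = a * μ.prod ν S := by
        rw [lintegral_const_mul _ (measurable_measure_prodMk_left hU), ← Measure.prod_apply hU,
          measure_toMeasurable]

theorem lintegral_lintegral_le_tsum_mul_prod [DiscreteMeasurableSpace α]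
    [DiscreteMeasurableSpace β] (μ : Measure α) (ν : Measure β) [SFinite ν] (f : α → β → ℕ)
    (s : ℕ → ℝ≥0∞) :
    ∫⁻ x, ∫⁻ y, s (f x y) ∂ν ∂μ ≤ ∑' n, s n * μ.prod ν {q | f q.1 q.2 = n} := by
  have hs : ∀ x y,
      s (f x y) = ∑' n, {q : α × β | f q.1 q.2 = n}.indicator (fun _ => s n) (x, y) := fun x y => by
      rw [tsum_eq_single (f x y) fun n hn => ?_]
      · simp
      · exact Set.indicator_of_notMem (Ne.symm hn) _
  simp only [hs]
  rw [lintegral_congr fun x => lintegral_tsum fun n => Measurable.of_discrete.aemeasurable,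
    lintegral_tsum fun n => Measurable.of_discrete.aemeasurable]
  exact ENNReal.tsum_le_tsum fun n => lintegral_lintegral_indicator_le_prod μ ν _ (s n)

theorem lintegral_lintegral_inv_pow_le [DiscreteMeasurableSpace α] [DiscreteMeasurableSpace β]
    (μ : Measure α) (ν : Measure β) [SFinite ν] (f : α → β → ℕ) {c θ p : ℝ} (hc : 0 ≤ c)
    (hθ : 0 ≤ θ) (hθp : θ < p)
    (htail : ∀ n : ℕ, μ.prod ν {q | f q.1 q.2 = n} ≤ ENNReal.ofReal (c * θ ^ n)) :
    ∫⁻ x, ∫⁻ y, (ENNReal.ofReal p)⁻¹ ^ f x y ∂ν ∂μ ≤ ENNReal.ofReal (c * (1 - θ / p)⁻¹) := by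
  have hp : 0 < p := hθ.trans_lt hθp
  have hr0 : 0 ≤ θ / p := div_nonneg hθ hp.le
  have hr1 : θ / p < 1 := (div_lt_one hp).mpr hθp
  calc ∫⁻ x, ∫⁻ y, (ENNReal.ofReal p)⁻¹ ^ f x y ∂ν ∂μ
      ≤ ∑' n, (ENNReal.ofReal p)⁻¹ ^ n * μ.prod ν {q | f q.1 q.2 = n} :=
        lintegral_lintegral_le_tsum_mul_prod μ ν f _
    _ ≤ ∑' n, ENNReal.ofReal (c * (θ / p) ^ n) := ENNReal.tsum_le_tsum fun n => by
        grw [htail n, ← ENNReal.ofReal_inv_of_pos hp, ← ENNReal.ofReal_pow (inv_nonneg.mpr hp.le),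
          ← ENNReal.ofReal_mul (by positivity)]
        exact ENNReal.ofReal_le_ofReal (by ring : _ = _).le
    _ = ENNReal.ofReal (c * (1 - θ / p)⁻¹) := by
        rw [← ENNReal.ofReal_tsum_of_nonneg (fun n => mul_nonneg hc (pow_nonneg hr0 n))
          ((summable_geometric_of_lt_one hr0 hr1).mul_left c), tsum_mul_left,
          tsum_geometric_of_lt_one hr0 hr1]

end ProductBound

section Percolation

variable {V : Type*} {G : SimpleGraph V}

theorem mem_edgeSet_percGraph {ω : Set (Sym2 V)} {e : Sym2 V} :
    e ∈ (percGraph G ω).edgeSet ↔ e ∈ G.edgeSet ∧ e ∈ ω := by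
  induction e using Sym2.ind
  exact Iff.rfl

def allOpen (s : Finset (Sym2 V)) : Set (Set (Sym2 V)) := {ω | ∀ e ∈ s, e ∈ ω}

theorem measurableSet_allOpen (s : Finset (Sym2 V)) : MeasurableSet (allOpen s) := by
  simp only [allOpen, Set.ofPred_forall]
  exact MeasurableSet.biInter s.countable_toSet fun e _ => measurableSet_mem e

theorem allOpen_inter_allOpen [DecidableEq (Sym2 V)] (s t : Finset (Sym2 V)) :
    allOpen s ∩ allOpen t = allOpen (s ∪ t) := by
  ext ω
  simp only [allOpen, Set.mem_inter_iff, Set.mem_ofPred_eq, Finset.mem_union, or_imp, forall_and]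

theorem coe_edges_toFinset_subset_edgeSet [DecidableEq (Sym2 V)] {u v : V} (φ : G.Walk u v) :
    ↑φ.edges.toFinset ⊆ G.edgeSet :=
  fun _ he => φ.edges_subset_edgeSet (List.mem_toFinset.mp he)

theorem allOpen_edges_subset_cluster [DecidableEq (Sym2 V)] {u v : V} (φ : G.Walk u v) :
    allOpen φ.edges.toFinset ⊆ {ω | v ∈ cluster G ω u} := fun ω hω =>
  (φ.transfer (percGraph G ω) fun e he => mem_edgeSet_percGraph.mpr
    ⟨φ.edges_subset_edgeSet he, hω e (List.mem_toFinset.mpr he)⟩).reachable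

namespace IsBernoulli

variable {p : ℝ} {P : Measure (Set (Sym2 V))}

theorem measure_allOpen_ne_zero (hP : IsBernoulli G p P) (hp : 0 < p) {s : Finset (Sym2 V)}
    (hs : ↑s ⊆ G.edgeSet) : P (allOpen s) ≠ 0 := by
  rw [allOpen, hP.2.2 s hs]
  exact pow_ne_zero _ (ENNReal.ofReal_pos.mpr hp).ne'

theorem measure_allOpen_inter_div [DecidableEq (Sym2 V)] (hP : IsBernoulli G p P) (hp : 0 < p)
    {s t : Finset (Sym2 V)} (hs : ↑s ⊆ G.edgeSet) (ht : ↑t ⊆ G.edgeSet) :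
    P (allOpen s ∩ allOpen t) / (P (allOpen s) * P (allOpen t)) =
      (ENNReal.ofReal p)⁻¹ ^ (s ∩ t).card := by
  have hst : ↑(s ∪ t) ⊆ G.edgeSet := by rw [Finset.coe_union]; exact Set.union_subset hs ht
  have hq : ENNReal.ofReal p ≠ 0 := (ENNReal.ofReal_pos.mpr hp).ne'
  rw [allOpen_inter_allOpen, allOpen, allOpen, allOpen, hP.2.2 s hs, hP.2.2 t ht, hP.2.2 _ hst,
    ← pow_add, ← Finset.card_union_add_card_inter, pow_add, ENNReal.div_eq_inv_mul,
    ENNReal.mul_inv (Or.inl (pow_ne_zero _ hq)) (Or.inr (pow_ne_zero _ hq)), mul_right_comm,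
    ENNReal.inv_mul_cancel (pow_ne_zero _ hq) (ENNReal.pow_ne_top ENNReal.ofReal_ne_top),
    one_mul, ENNReal.inv_pow]

theorem correlationEnergy_allOpen_edges [DecidableEq (Sym2 V)] (hP : IsBernoulli G p P)
    (hp : 0 < p) {x y : V} (μ : Measure (G.Walk x y)) :
    correlationEnergy P μ (fun φ => allOpen φ.edges.toFinset) =
      ∫⁻ φ, ∫⁻ ψ, (ENNReal.ofReal p)⁻¹ ^ sharedEdges φ ψ ∂μ ∂μ := by
  simp only [correlationEnergy, hP.measure_allOpen_inter_div hp
    (coe_edges_toFinset_subset_edgeSet _) (coe_edges_toFinset_subset_edgeSet _), sharedEdges]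
  congr!

end IsBernoulli

end Percolation

theorem connection_lower_bound_general
    {V : Type*} (G : SimpleGraph V) (x y : V)
    (θ c : ℝ) (hθ : θ ∈ Set.Ioo (0 : ℝ) 1) (hc : 0 < c)
    (μ : Measure (G.Walk x y)) (hμ : IsProbabilityMeasure μ)
    (hint : ∀ n : ℕ, (μ.prod μ) {q | sharedEdges q.1 q.2 = n} ≤
      ENNReal.ofReal (c * θ ^ n))
    (p : ℝ) (hp1 : θ < p)
    (P : Measure (Set (Sym2 V))) (hP : IsBernoulli G p P) :
    ENNReal.ofReal (c⁻¹ * (1 - θ / p)) ≤ P {ω | y ∈ cluster G ω x} := by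
  classical
  have hp : 0 < p := hθ.1.trans hp1
  have := hP.1
  have hsecond := one_le_measure_mul_correlationEnergy (P := P) (μ := μ)
    (fun φ => measurableSet_allOpen _)
    (fun φ => hP.measure_allOpen_ne_zero hp (coe_edges_toFinset_subset_edgeSet φ))
    allOpen_edges_subset_cluster
  have henergy := (hP.correlationEnergy_allOpen_edges hp μ).trans_le
    (lintegral_lintegral_inv_pow_le μ μ sharedEdges hc.le hθ.1.le hp1 hint)
  have hB : 0 < c * (1 - θ / p)⁻¹ :=
    mul_pos hc (inv_pos.mpr (sub_pos.mpr ((div_lt_one hp).mpr hp1)))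
  rw [show c⁻¹ * (1 - θ / p) = (c * (1 - θ / p)⁻¹)⁻¹ by rw [mul_inv, inv_inv],
    ENNReal.ofReal_inv_of_pos hB, ENNReal.inv_le_iff_le_mul
    (fun _ => (ENNReal.ofReal_pos.mpr hB).ne') (fun h => absurd h ENNReal.ofReal_ne_top)]
  exact hsecond.trans (by rw [mul_comm]; gcongr)

/-- **Second-moment lower bound for connection probabilities**
(Benjamini–Pemantle–Peres technique).  Let `x, y` be vertices of `G`, let
`θ ∈ (0,1)` and `c > 0`, and let `μ` be a probability measure on paths joining
`x` to `y` such that `(μ × μ){(φ,ψ) : |φ ∩ ψ| = n} ≤ c θⁿ` for all `n`.  Then,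
for Bernoulli(`p`) bond percolation on `G` with `θ < p < 1`,
`τ(x,y) ≥ c⁻¹ (1 − θ/p)`. -/
theorem connection_lower_bound
    {V : Type*} (G : SimpleGraph V) (x y : V)
    (θ c : ℝ) (hθ : θ ∈ Set.Ioo (0 : ℝ) 1) (hc : 0 < c)
    (μ : Measure (G.Walk x y)) (hμ : IsProbabilityMeasure μ)
    (hint : ∀ n : ℕ, (μ.prod μ) {q | sharedEdges q.1 q.2 = n} ≤
      ENNReal.ofReal (c * θ ^ n))
    (p : ℝ) (hp1 : θ < p) (hp2 : p < 1)
    (P : Measure (Set (Sym2 V))) (hP : IsBernoulli G p P) :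
    ENNReal.ofReal (c⁻¹ * (1 - θ / p)) ≤ P {ω | y ∈ cluster G ω x} :=
  connection_lower_bound_general G x y θ c hθ hc μ hμ hint p hp1 P hP
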